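/- Two finite simplicial complexes K and L have the same strong homotopy type if and only if there exists a strong equivalence φ : K → L. -/

import Mathlib

/- Theory of strong homotopy types of finite simplicial complexes
   (Barmak–Minian), basic definitions. -/

open Classical

namespace StrongHomotopy

/-- A finite abstract simplicial complex with vertices from the ambient type `V`:
a finite family of nonempty finite subsets of `V`, closed under nonempty subsets.
(All singletons of vertices actually used are faces, by downward closure.) -/
structure Cplx (V : Type) where
  faces : Finset (Finset V)
  nonempty_of_mem : ∀ ⦃σ : Finset V⦄, σ ∈ faces → σ.Nonempty
  down_closed : ∀ ⦃σ τ : Finset V⦄, σ ∈ faces → τ ⊆ σ → τ.Nonempty → τ ∈ faces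

variable {V W : Type}

/-- `v` is a vertex of `K`. -/
def IsVertex (K : Cplx V) (v : V) : Prop := {v} ∈ K.faces

noncomputable section

/-- The set of faces of the link of `v` in `K`. -/
def link (K : Cplx V) (v : V) : Finset (Finset V) :=
  K.faces.filter fun σ => v ∉ σ ∧ insert v σ ∈ K.faces

/-- A family of faces is a simplicial cone with apex `a`. -/
def IsConeWithApex (F : Finset (Finset V)) (a : V) : Prop :=
  {a} ∈ F ∧ ∀ σ ∈ F, insert a σ ∈ F

/-- A family of faces is a simplicial cone. -/
def IsCone (F : Finset (Finset V)) : Prop := ∃ a, IsConeWithApex F a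

/-- `v` is dominated by `v'` in `K`: the link of `v` is a cone with apex `v'`. -/
def DominatedBy (K : Cplx V) (v v' : V) : Prop := IsConeWithApex (link K v) v'

/-- `v` is a dominated vertex of `K`: its link is a simplicial cone. -/
def Dominated (K : Cplx V) (v : V) : Prop := IsCone (link K v)

/-- Deletion `K ∖ v`: the full subcomplex spanned by the vertices other than `v`. -/
def delete (K : Cplx V) (v : V) : Cplx V where
  faces := K.faces.filter fun σ => v ∉ σ
  nonempty_of_mem := fun σ h => K.nonempty_of_mem (Finset.mem_filter.mp h).1
  down_closed := by
    intro σ τ hσ hsub hne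
    rw [Finset.mem_filter] at hσ ⊢
    exact ⟨K.down_closed hσ.1 hsub hne, fun hv => hσ.2 (hsub hv)⟩

/-- The link of a vertex, as a simplicial complex. -/
def linkCplx (K : Cplx V) (v : V) : Cplx V where
  faces := link K v
  nonempty_of_mem := fun σ h => K.nonempty_of_mem (Finset.mem_filter.mp h).1
  down_closed := by
    intro σ τ hσ hsub hne
    simp only [link, Finset.mem_filter] at hσ ⊢
    refine ⟨K.down_closed hσ.1 hsub hne, fun hv => hσ.2.1 (hsub hv), ?_⟩
    exact K.down_closed hσ.2.2 (Finset.insert_subset_insert v hsub)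
      ⟨v, Finset.mem_insert_self v τ⟩

/-- Elementary strong collapse: deletion of a dominated vertex. -/
def ElemStrongCollapse (K L : Cplx V) : Prop := ∃ v, Dominated K v ∧ L = delete K v

/-- `K` strong collapses to `L` (a sequence of elementary strong collapses). -/
def StrongCollapses : Cplx V → Cplx V → Prop := Relation.ReflTransGen ElemStrongCollapse

/-- The complex with a single vertex `v`. -/
def pt (v : V) : Cplx V where
  faces := {{v}}
  nonempty_of_mem := by
    intro σ h
    rw [Finset.mem_singleton] at h
    subst h
    exact ⟨v, Finset.mem_singleton_self v⟩
  down_closed := by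
    intro σ τ hσ hsub hne
    rw [Finset.mem_singleton] at hσ ⊢
    subst hσ
    rcases Finset.subset_singleton_iff.mp hsub with h | h
    · exact absurd h (Finset.nonempty_iff_ne_empty.mp hne)
    · exact h

/-- `K` is strong collapsible: it strong collapses to a single vertex. -/
def StrongCollapsible (K : Cplx V) : Prop := ∃ v, StrongCollapses K (pt v)

/-- A minimal complex: no dominated vertices. -/
def MinimalCplx (K : Cplx V) : Prop := ∀ v, ¬ Dominated K v

/-- A vertex map is simplicial if it sends faces to faces. -/
def IsSimplicial (K : Cplx V) (L : Cplx W) (f : V → W) : Prop :=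
  ∀ σ ∈ K.faces, σ.image f ∈ L.faces

/-- Two vertex maps are contiguous. -/
def Contiguous (K : Cplx V) (L : Cplx W) (f g : V → W) : Prop :=
  ∀ σ ∈ K.faces, σ.image f ∪ σ.image g ∈ L.faces

/-- `f` and `g` lie in the same contiguity class: they are joined by
a finite chain of (pairwise contiguous) maps. -/
def ContigClass (K : Cplx V) (L : Cplx W) : (V → W) → (V → W) → Prop :=
  Relation.ReflTransGen (Contiguous K L)

/-- A strong equivalence of simplicial complexes. -/
def StrongEquiv (K : Cplx V) (L : Cplx W) (f : V → W) : Prop :=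
  IsSimplicial K L f ∧ ∃ g : W → V, IsSimplicial L K g ∧
    ContigClass K K (g ∘ f) id ∧ ContigClass L L (f ∘ g) id

/-- `f` is a simplicial isomorphism from `K` to `L`: a simplicial map,
injective on vertices, inducing a bijection on faces. -/
def IsIsoMap (K : Cplx V) (L : Cplx W) (f : V → W) : Prop :=
  IsSimplicial K L f ∧ Set.InjOn f {v | IsVertex K v} ∧
    K.faces.image (fun σ => σ.image f) = L.faces

/-- `K` and `L` are simplicially isomorphic. -/
def Isomorphic (K : Cplx V) (L : Cplx W) : Prop := ∃ f, IsIsoMap K L f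

/-- `L` is a subcomplex of `K`. -/
def Subcplx (L K : Cplx V) : Prop := L.faces ⊆ K.faces

/-- `L` is a full subcomplex of `K`. -/
def IsFullSub (L K : Cplx V) : Prop :=
  L.faces ⊆ K.faces ∧ ∀ σ ∈ K.faces, (∀ v ∈ σ, IsVertex L v) → σ ∈ L.faces

/-- `K₀` is a core of `K`: a minimal complex to which `K` strong collapses. -/
def IsCore (K K₀ : Cplx V) : Prop := MinimalCplx K₀ ∧ StrongCollapses K K₀

/-- Same strong homotopy type: joined by a finite sequence of strong collapses,
strong expansions and simplicial isomorphisms. (In the abstract setting, where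
new vertices may be created freely, isomorphisms are generated by collapses and
expansions; over a fixed ambient vertex type they must be added as moves.) -/
def SameSHT (K L : Cplx V) : Prop :=
  Relation.ReflTransGen
    (fun A B => ElemStrongCollapse A B ∨ ElemStrongCollapse B A ∨ Isomorphic A B) K L

/-- `K` is vertex-homogeneous: its automorphism group acts transitively on vertices. -/
def VertexHomog (K : Cplx V) : Prop :=
  ∀ v w, IsVertex K v → IsVertex K w → ∃ φ : V → V, IsIsoMap K K φ ∧ φ v = w

/-! ### The nerve -/

/-- The maximal faces of `K`. -/
def maxFaces (K : Cplx V) : Finset (Finset V) :=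
  K.faces.filter fun σ => ∀ τ ∈ K.faces, σ ⊆ τ → σ = τ

/-- The nerve of `K`: vertices are the maximal simplices of `K`; a nonempty set
of maximal simplices is a face iff the simplices have a common vertex. -/
def nerve (K : Cplx V) : Cplx (Finset V) where
  faces := (maxFaces K).powerset.filter fun S => S.Nonempty ∧ ∃ v, ∀ σ ∈ S, v ∈ σ
  nonempty_of_mem := fun S h => (Finset.mem_filter.mp h).2.1
  down_closed := by
    intro S T hS hsub hne
    rw [Finset.mem_filter, Finset.mem_powerset] at hS ⊢
    obtain ⟨hpow, -, v, hv⟩ := hS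
    exact ⟨hsub.trans hpow, hne, v, fun σ hσ => hv σ (hsub hσ)⟩

/-- Iterated ambient vertex types for iterated nerves. -/
def iterV (V : Type) : ℕ → Type := fun n => Nat.rec V (fun _ T => Finset T) n

/-- The iterated nerve `Nⁿ(K)` (with `N⁰(K) = K`). -/
def iterNerve (K : Cplx V) : (n : ℕ) → Cplx (iterV V n)
  | 0 => K
  | n + 1 => nerve (iterNerve K n)

/-- A complex consists of a single vertex. -/
def IsPoint (K : Cplx V) : Prop := ∃ v, K.faces = {{v}}

/-! ### Joins -/

/-- The left part of a set of vertices of `V ⊕ W`. -/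
def lefts (ρ : Finset (V ⊕ W)) : Finset V :=
  ρ.preimage Sum.inl Sum.inl_injective.injOn

/-- The right part of a set of vertices of `V ⊕ W`. -/
def rights (ρ : Finset (V ⊕ W)) : Finset W :=
  ρ.preimage Sum.inr Sum.inr_injective.injOn

lemma lefts_union_rights (ρ : Finset (V ⊕ W)) :
    (lefts ρ).image Sum.inl ∪ (rights ρ).image Sum.inr = ρ := by
  ext x
  cases x with
  | inl v => simp [lefts, rights]
  | inr w => simp [lefts, rights]

lemma lefts_eq (σ : Finset V) (τ : Finset W) :
    lefts (σ.image Sum.inl ∪ τ.image Sum.inr) = σ := by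
  ext v; simp [lefts]

lemma rights_eq (σ : Finset V) (τ : Finset W) :
    rights (σ.image Sum.inl ∪ τ.image Sum.inr) = τ := by
  ext w; simp [rights]

/-- The faces of the join `K * L`. -/
def joinFaces (K : Cplx V) (L : Cplx W) : Finset (Finset (V ⊕ W)) :=
  (((insert ∅ K.faces) ×ˢ (insert ∅ L.faces)).image
    (fun p => p.1.image Sum.inl ∪ p.2.image Sum.inr)).erase ∅

lemma mem_joinFaces {K : Cplx V} {L : Cplx W} {ρ : Finset (V ⊕ W)} :
    ρ ∈ joinFaces K L ↔
      ρ.Nonempty ∧ lefts ρ ∈ insert ∅ K.faces ∧ rights ρ ∈ insert ∅ L.faces := by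
  unfold joinFaces
  constructor
  · intro h
    have hne : ρ ≠ ∅ := Finset.ne_of_mem_erase h
    have h' := Finset.mem_of_mem_erase h
    rw [Finset.mem_image] at h'
    obtain ⟨p, hp, hρ⟩ := h'
    rw [Finset.mem_product] at hp
    subst hρ
    rw [lefts_eq, rights_eq]
    exact ⟨Finset.nonempty_iff_ne_empty.mpr hne, hp.1, hp.2⟩
  · rintro ⟨hne, hl, hr⟩
    apply Finset.mem_erase.mpr
    refine ⟨Finset.nonempty_iff_ne_empty.mp hne, ?_⟩
    rw [Finset.mem_image]
    exact ⟨(lefts ρ, rights ρ), Finset.mem_product.mpr ⟨hl, hr⟩, lefts_union_rights ρ⟩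

/-- The simplicial join `K * L` of complexes with disjoint vertex sets
(realized on the disjoint sum of the ambient types). -/
def join (K : Cplx V) (L : Cplx W) : Cplx (V ⊕ W) where
  faces := joinFaces K L
  nonempty_of_mem := fun ρ h => (mem_joinFaces.mp h).1
  down_closed := by
    intro ρ ρ' hρ hsub hne
    obtain ⟨-, hl, hr⟩ := mem_joinFaces.mp hρ
    apply mem_joinFaces.mpr
    refine ⟨hne, ?_, ?_⟩
    · rcases Finset.eq_empty_or_nonempty (lefts ρ') with h0 | h1
      · rw [h0]; exact Finset.mem_insert_self _ _
      · have hsubl : lefts ρ' ⊆ lefts ρ := by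
          intro v hv
          simp only [lefts, Finset.mem_preimage] at hv ⊢
          exact hsub hv
        have hKf : lefts ρ ∈ K.faces := by
          rcases Finset.mem_insert.mp hl with h | h
          · obtain ⟨v, hv⟩ := h1
            exact absurd (hsubl hv) (by simp [h])
          · exact h
        exact Finset.mem_insert.mpr (Or.inr (K.down_closed hKf hsubl h1))
    · rcases Finset.eq_empty_or_nonempty (rights ρ') with h0 | h1
      · rw [h0]; exact Finset.mem_insert_self _ _
      · have hsubr : rights ρ' ⊆ rights ρ := by
          intro w hw
          simp only [rights, Finset.mem_preimage] at hw ⊢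
          exact hsub hw
        have hLf : rights ρ ∈ L.faces := by
          rcases Finset.mem_insert.mp hr with h | h
          · obtain ⟨w, hw⟩ := h1
            exact absurd (hsubr hw) (by simp [h])
          · exact h
        exact Finset.mem_insert.mpr (Or.inr (L.down_closed hLf hsubr h1))

/-! ### Finite posets (finite T₀-spaces) -/

variable {P : Type} [PartialOrder P]

/-- `x` is a beat point of the finite poset `X`: the points of `X` strictly below
`x` have a maximum, or the points of `X` strictly above `x` have a minimum. -/
def BeatPoint (X : Finset P) (x : P) : Prop :=
  x ∈ X ∧ ((∃ y ∈ X, y < x ∧ ∀ z ∈ X, z < x → z ≤ y) ∨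
    (∃ y ∈ X, x < y ∧ ∀ z ∈ X, x < z → y ≤ z))

/-- Elementary strong collapse of finite posets: removal of a beat point. -/
def ElemPosetStrongCollapse (X Y : Finset P) : Prop :=
  ∃ x, BeatPoint X x ∧ Y = X.erase x

/-- Strong collapse of finite posets: successive removal of beat points. -/
def PosetStrongCollapses : Finset P → Finset P → Prop :=
  Relation.ReflTransGen ElemPosetStrongCollapse

/-- A finite poset is contractible iff it strong collapses to a point (Stong). -/
def PosetContractible (X : Finset P) : Prop := ∃ x, PosetStrongCollapses X {x}

/-- The link `Ĉ_x` of `x` in `X`: the points of `X` comparable with `x` and distinct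
from it. -/
def posetLink (X : Finset P) (x : P) : Finset P :=
  X.filter fun y => y < x ∨ x < y

/-- `x` is a weak point of `X`: its link is contractible. -/
def WeakPoint (X : Finset P) (x : P) : Prop :=
  x ∈ X ∧ PosetContractible (posetLink X x)

/-- Collapse of finite posets: successive removal of weak points. -/
def PosetCollapses : Finset P → Finset P → Prop :=
  Relation.ReflTransGen (fun X Y => ∃ x, WeakPoint X x ∧ Y = X.erase x)

/-- A finite poset is collapsible if it collapses to a point. -/
def PosetCollapsible (X : Finset P) : Prop := ∃ x, PosetCollapses X {x}

/-- The order complex of a finite poset: faces are the nonempty chains. -/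
def orderCplx (X : Finset P) : Cplx P where
  faces := X.powerset.filter fun σ => σ.Nonempty ∧ IsChain (· ≤ ·) (σ : Set P)
  nonempty_of_mem := fun σ h => (Finset.mem_filter.mp h).2.1
  down_closed := by
    intro σ τ hσ hsub hne
    rw [Finset.mem_filter, Finset.mem_powerset] at hσ ⊢
    exact ⟨hsub.trans hσ.1, hne, hσ.2.2.mono (Finset.coe_subset.mpr hsub)⟩

/-- The barycentric subdivision of a complex: the order complex of its poset of
faces (the face poset, ordered by inclusion). -/
def sd (K : Cplx V) : Cplx (Finset V) := orderCplx K.faces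

/-- Homotopy of order-preserving maps between finite posets: being joined by a
fence in the pointwise order. -/
def PosetHomotopic {X Y : Type} [Preorder X] [Preorder Y] (f g : X →o Y) : Prop :=
  Relation.ReflTransGen (fun p q : X →o Y => p ≤ q ∨ q ≤ p) f g

/-- Homotopy equivalence of finite posets. -/
def PosetHomotopyEquiv (X Y : Type) [Preorder X] [Preorder Y] : Prop :=
  ∃ (f : X →o Y) (g : Y →o X),
    PosetHomotopic (g.comp f) OrderHom.id ∧ PosetHomotopic (f.comp g) OrderHom.id

/-! ### Classical collapses and n-collapses -/

/-- Elementary (classical) simplicial collapse: removal of a free face `σ`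
together with the unique face `τ` properly containing it. -/
def ElemCollapse (K L : Cplx V) : Prop :=
  ∃ σ τ : Finset V, σ ∈ K.faces ∧ τ ∈ K.faces ∧ σ ⊂ τ ∧
    (∀ ρ ∈ K.faces, σ ⊂ ρ → ρ = τ) ∧ L.faces = K.faces \ {σ, τ}

/-- Classical simplicial collapse. -/
def Collapses : Cplx V → Cplx V → Prop := Relation.ReflTransGen ElemCollapse

/-- A complex is collapsible if it collapses to a point. -/
def Collapsible (K : Cplx V) : Prop := ∃ v, Collapses K (pt v)

/-- `n`-collapses: a `0`-collapse is a strong collapse; an `(n+1)`-collapse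
successively deletes vertices whose links are `n`-collapsible. -/
def NCollapses : ℕ → Cplx V → Cplx V → Prop
  | 0 => StrongCollapses
  | n + 1 => Relation.ReflTransGen
      (fun K L => ∃ v, (∃ w, NCollapses n (linkCplx K v) (pt w)) ∧ L = delete K v)

/-- `K` is `n`-collapsible: it `n`-collapses to a single vertex. -/
def NCollapsible (n : ℕ) (K : Cplx V) : Prop := ∃ v, NCollapses n K (pt v)

/-- `K` is non-evasive: it is `n`-collapsible for some `n`. -/
def NonEvasive (K : Cplx V) : Prop := ∃ n, NCollapsible n K

end

section Aux
variable {V W X : Type}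

lemma vertex_of_mem {K : Cplx V} {σ : Finset V} {v : V} (hσ : σ ∈ K.faces) (hv : v ∈ σ) :
    IsVertex K v :=
  K.down_closed hσ (Finset.singleton_subset_iff.mpr hv) ⟨v, Finset.mem_singleton_self v⟩

lemma exists_maximal_face {K : Cplx V} {σ : Finset V} (hσ : σ ∈ K.faces) :
    ∃ τ ∈ K.faces, σ ⊆ τ ∧ ∀ ρ ∈ K.faces, τ ⊆ ρ → τ = ρ := by
  classical
  obtain ⟨τ, hτ, hmax⟩ := (K.faces.filter (fun τ => σ ⊆ τ)).exists_max_image Finset.card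
    ⟨σ, by simp [hσ]⟩
  rw [Finset.mem_filter] at hτ
  refine ⟨τ, hτ.1, hτ.2, fun ρ hρ hsub => ?_⟩
  have hρ' : ρ ∈ K.faces.filter (fun τ => σ ⊆ τ) :=
    Finset.mem_filter.mpr ⟨hρ, hτ.2.trans hsub⟩
  exact Finset.eq_of_subset_of_card_le hsub (hmax ρ hρ')

lemma mem_link_iff {K : Cplx V} {v : V} {σ : Finset V} :
    σ ∈ link K v ↔ σ ∈ K.faces ∧ v ∉ σ ∧ insert v σ ∈ K.faces := by
  simp [link, Finset.mem_filter]

/-- Image of a set of vertices under a map agreeing with `id` on them. -/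
lemma image_eq_self {σ : Finset V} {f : V → V} (h : ∀ x ∈ σ, f x = x) :
    σ.image f = σ := by
  rw [Finset.image_congr (fun x hx => h x hx), Finset.image_id']

end Aux
section Aux2
variable {V W X : Type}

/-- Key step: if `q` fixes the vertices of a minimal complex `K` and `p` is
contiguous to `q`, then `p` fixes the vertices of `K` as well. -/
lemma fix_of_contiguous {K : Cplx V} (hmin : MinimalCplx K) {p q : V → V}
    (hpq : Contiguous K K p q) (hq : ∀ v, IsVertex K v → q v = v) :
    ∀ v, IsVertex K v → p v = v := by
  intro v hv
  by_contra hne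
  apply hmin v
  -- every maximal face containing v contains p v
  have key : ∀ σ ∈ K.faces, v ∈ σ → (∀ ρ ∈ K.faces, σ ⊆ ρ → σ = ρ) → p v ∈ σ := by
    intro σ hσ hvσ hmax
    have hface : σ.image p ∪ σ.image q ∈ K.faces := hpq σ hσ
    have hq' : σ.image q = σ := image_eq_self (fun x hx => hq x (vertex_of_mem hσ hx))
    have hsub : σ ⊆ σ.image p ∪ σ.image q := by
      rw [hq']; exact Finset.subset_union_right
    have heq : σ = σ.image p ∪ σ.image q := hmax _ hface hsub
    have : p v ∈ σ.image p ∪ σ.image q :=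
      Finset.mem_union_left _ (Finset.mem_image_of_mem p hvσ)
    rwa [← heq] at this
  refine ⟨p v, ?_, ?_⟩
  · -- {p v} ∈ link K v
    obtain ⟨σ, hσ, hvσ, hmax⟩ := exists_maximal_face (hv : ({v} : Finset V) ∈ K.faces)
    have hvmem : v ∈ σ := hvσ (Finset.mem_singleton_self v)
    have hpv : p v ∈ σ := key σ hσ hvmem hmax
    rw [mem_link_iff]
    refine ⟨K.down_closed hσ (Finset.singleton_subset_iff.mpr hpv)
      ⟨p v, Finset.mem_singleton_self _⟩, ?_, ?_⟩
    · simp only [Finset.mem_singleton]; exact fun h => hne h.symm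
    · exact K.down_closed hσ (by
        intro x hx
        rcases Finset.mem_insert.mp hx with h | h
        · exact h ▸ hvmem
        · exact (Finset.mem_singleton.mp h) ▸ hpv) ⟨v, Finset.mem_insert_self _ _⟩
  · intro τ hτ
    rw [mem_link_iff] at hτ
    obtain ⟨hτf, hvτ, hins⟩ := hτ
    obtain ⟨σ, hσ, hsub, hmax⟩ := exists_maximal_face hins
    have hvmem : v ∈ σ := hsub (Finset.mem_insert_self _ _)
    have hpv : p v ∈ σ := key σ hσ hvmem hmax
    have hτσ : τ ⊆ σ := (Finset.subset_insert _ _).trans hsub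
    rw [mem_link_iff]
    refine ⟨K.down_closed hσ (Finset.insert_subset hpv hτσ)
      ⟨p v, Finset.mem_insert_self _ _⟩, ?_, ?_⟩
    · intro h
      rcases Finset.mem_insert.mp h with h | h
      · exact hne h.symm
      · exact hvτ h
    · refine K.down_closed hσ ?_ ⟨v, Finset.mem_insert_self _ _⟩
      intro x hx
      rcases Finset.mem_insert.mp hx with h | h
      · exact h ▸ hvmem
      · rcases Finset.mem_insert.mp h with h' | h'
        · exact h' ▸ hpv
        · exact hτσ h'

lemma fix_of_contigClass {K : Cplx V} (hmin : MinimalCplx K) {p : V → V}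
    (h : ContigClass K K p id) : ∀ v, IsVertex K v → p v = v := by
  induction h using Relation.ReflTransGen.head_induction_on with
  | refl => exact fun v _ => rfl
  | head h' _ ih => exact fix_of_contiguous hmin h' ih

end Aux2
section Aux3
variable {V W X : Type}

lemma isSimplicial_id (K : Cplx V) : IsSimplicial K K id := by
  intro σ hσ
  rwa [Finset.image_id]

lemma contigClass_refl (K : Cplx V) (f : V → V) : ContigClass K K f f :=
  Relation.ReflTransGen.refl

lemma strongEquiv_refl (K : Cplx V) : StrongEquiv K K id :=
  ⟨isSimplicial_id K, id, isSimplicial_id K, contigClass_refl K _, contigClass_refl K _⟩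

lemma isSimplicial_comp {K : Cplx V} {L : Cplx W} {M : Cplx X} {f : V → W} {f' : W → X}
    (hf : IsSimplicial K L f) (hf' : IsSimplicial L M f') : IsSimplicial K M (f' ∘ f) := by
  intro σ hσ
  rw [← Finset.image_image]
  exact hf' _ (hf σ hσ)

lemma contiguous_conj {K : Cplx V} {L : Cplx W} {f : V → W} {g : W → V}
    (hf : IsSimplicial K L f) (hg : IsSimplicial L K g) {p q : W → W}
    (h : Contiguous L L p q) : Contiguous K K (g ∘ p ∘ f) (g ∘ q ∘ f) := by
  intro σ hσ
  have h1 : σ.image (g ∘ p ∘ f) = ((σ.image f).image p).image g := by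
    rw [Finset.image_image, Finset.image_image]; rfl
  have h2 : σ.image (g ∘ q ∘ f) = ((σ.image f).image q).image g := by
    rw [Finset.image_image, Finset.image_image]; rfl
  rw [h1, h2, ← Finset.image_union]
  exact hg _ (h _ (hf σ hσ))

lemma contigClass_conj {K : Cplx V} {L : Cplx W} {f : V → W} {g : W → V}
    (hf : IsSimplicial K L f) (hg : IsSimplicial L K g) {p q : W → W}
    (h : ContigClass L L p q) : ContigClass K K (g ∘ p ∘ f) (g ∘ q ∘ f) :=
  Relation.ReflTransGen.lift (fun r => g ∘ r ∘ f) (fun _ _ hr => contiguous_conj hf hg hr) _ _ h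

lemma strongEquiv_comp {K : Cplx V} {L : Cplx W} {M : Cplx X} {f : V → W} {f' : W → X}
    (h : StrongEquiv K L f) (h' : StrongEquiv L M f') : StrongEquiv K M (f' ∘ f) := by
  obtain ⟨hf, g, hg, hK, hL⟩ := h
  obtain ⟨hf', g', hg', hL', hM⟩ := h'
  refine ⟨isSimplicial_comp hf hf', g ∘ g', isSimplicial_comp hg' hg, ?_, ?_⟩
  · have step : ContigClass K K (g ∘ (g' ∘ f') ∘ f) (g ∘ id ∘ f) := contigClass_conj hf hg hL'
    exact Relation.ReflTransGen.trans step hK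
  · have step : ContigClass M M (f' ∘ (f ∘ g) ∘ g') (f' ∘ id ∘ g') := contigClass_conj hg' hf' hL
    exact Relation.ReflTransGen.trans step hM

lemma strongEquiv_symm {K : Cplx V} {L : Cplx W} {f : V → W} (h : StrongEquiv K L f) :
    ∃ g : W → V, StrongEquiv L K g := by
  obtain ⟨hf, g, hg, hK, hL⟩ := h
  exact ⟨g, hg, f, hf, hL, hK⟩

end Aux3
section Aux4
variable {V : Type}

lemma elem_equiv {K L : Cplx V} (h : ElemStrongCollapse K L) :
    ∃ r : V → V, StrongEquiv K L r ∧ StrongEquiv L K id := by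
  classical
  obtain ⟨v, ⟨v', hlink, hcone⟩, rfl⟩ := h
  rw [mem_link_iff] at hlink
  obtain ⟨hv'f, hvv', hins⟩ := hlink
  have hne : v' ≠ v := by
    intro h; apply hvv'; rw [h]; exact Finset.mem_singleton_self v
  set r : V → V := fun x => if x = v then v' else x with hr
  have hrv : ∀ x, r x ≠ v := by
    intro x
    by_cases hx : x = v
    · simp [hr, hx, hne]
    · simp [hr, hx]
  have himg_nomem : ∀ σ : Finset V, v ∉ σ → σ.image r = σ := by
    intro σ hσ
    exact image_eq_self (fun x hx => by
      have : x ≠ v := fun h => hσ (h ▸ hx)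
      simp [hr, this])
  -- key: for a face σ containing v, insert v' σ is a face
  have hkey : ∀ σ ∈ K.faces, v ∈ σ → insert v' σ ∈ K.faces := by
    intro σ hσ hvσ
    by_cases hE : σ.erase v = ∅
    · have hσv : σ = {v} := by
        apply Finset.eq_singleton_iff_unique_mem.mpr
        refine ⟨hvσ, fun x hx => ?_⟩
        by_contra hxv
        exact absurd (Finset.mem_erase.mpr ⟨hxv, hx⟩) (by rw [hE]; exact Finset.notMem_empty x)
      rw [hσv]
      rw [Finset.pair_comm]; exact hins
    · have hτ : σ.erase v ∈ link K v := by
        rw [mem_link_iff]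
        refine ⟨K.down_closed hσ (Finset.erase_subset v σ)
          (Finset.nonempty_iff_ne_empty.mpr hE), Finset.notMem_erase v σ, ?_⟩
        rw [Finset.insert_erase hvσ]; exact hσ
      have h2 := hcone _ hτ
      rw [mem_link_iff] at h2
      have := h2.2.2
      rw [Finset.insert_comm, Finset.insert_erase hvσ] at this
      exact this
  have hrK : ∀ σ ∈ K.faces, σ.image r ∪ σ ∈ K.faces := by
    intro σ hσ
    by_cases hvσ : v ∈ σ
    · refine K.down_closed (hkey σ hσ hvσ) ?_ ?_
      · intro x hx
        rcases Finset.mem_union.mp hx with hx | hx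
        · obtain ⟨y, hy, rfl⟩ := Finset.mem_image.mp hx
          by_cases hyv : y = v
          · simp [hr, hyv, Finset.mem_insert_self]
          · simp only [hr, if_neg hyv]
            exact Finset.mem_insert_of_mem hy
        · exact Finset.mem_insert_of_mem hx
      · exact ⟨v, Finset.mem_union_right _ hvσ⟩
    · rw [himg_nomem σ hvσ, Finset.union_self]; exact hσ
  have hrsimp : IsSimplicial K (delete K v) r := by
    intro σ hσ
    rw [delete, Finset.mem_filter]
    constructor
    · refine K.down_closed (hrK σ hσ) Finset.subset_union_left ?_
      obtain ⟨x, hx⟩ := K.nonempty_of_mem hσ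
      exact ⟨r x, Finset.mem_image_of_mem r hx⟩
    · intro hmem
      obtain ⟨y, _, hy⟩ := Finset.mem_image.mp hmem
      exact hrv y hy
  have hidsimp : IsSimplicial (delete K v) K id := by
    intro σ hσ
    rw [Finset.image_id]
    exact (Finset.mem_filter.mp hσ).1
  have hcontigK : ContigClass K K (id ∘ r) id := by
    refine Relation.ReflTransGen.single ?_
    intro σ hσ
    have : σ.image (id ∘ r) = σ.image r := by
      apply Finset.image_congr; intro x _; rfl
    rw [this, Finset.image_id]
    exact hrK σ hσ
  have hcontigL : ContigClass (delete K v) (delete K v) (r ∘ id) id := by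
    refine Relation.ReflTransGen.single ?_
    intro σ hσ
    have hvs : v ∉ σ := (Finset.mem_filter.mp hσ).2
    have : σ.image (r ∘ id) = σ := image_eq_self (fun x hx => by
      have : x ≠ v := fun h => hvs (h ▸ hx)
      simp [hr, this])
    rw [this, Finset.image_id, Finset.union_self]
    exact hσ
  exact ⟨r, ⟨hrsimp, id, hidsimp, hcontigK, hcontigL⟩,
    ⟨hidsimp, r, hrsimp, hcontigL, hcontigK⟩⟩

end Aux4
section Aux5
variable {V : Type}

lemma strongEquiv_of_iso {K L : Cplx V} {f : V → V} (h : IsIsoMap K L f) :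
    StrongEquiv K L f := by
  classical
  obtain ⟨hf, hinj, himg⟩ := h
  set g : V → V := fun w => if hw : ∃ u, IsVertex K u ∧ f u = w then hw.choose else w with hg
  have hgspec : ∀ w, IsVertex L w → IsVertex K (g w) ∧ f (g w) = w := by
    intro w hw
    have hex : ∃ u, IsVertex K u ∧ f u = w := by
      have : ({w} : Finset V) ∈ L.faces := hw
      rw [← himg, Finset.mem_image] at this
      obtain ⟨σ, hσ, hσw⟩ := this
      obtain ⟨x, hx⟩ := K.nonempty_of_mem hσ
      refine ⟨x, vertex_of_mem hσ hx, ?_⟩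
      have : f x ∈ σ.image f := Finset.mem_image_of_mem f hx
      rw [hσw, Finset.mem_singleton] at this
      exact this
    simp only [hg, dif_pos hex]
    exact hex.choose_spec
  have hgf : ∀ u, IsVertex K u → g (f u) = u := by
    intro u hu
    have hfu : IsVertex L (f u) := by
      have := hf {u} hu
      rwa [Finset.image_singleton] at this
    obtain ⟨hgv, hfg⟩ := hgspec (f u) hfu
    exact hinj hgv hu hfg
  have hgsimp : IsSimplicial L K g := by
    intro τ hτ
    rw [← himg, Finset.mem_image] at hτ
    obtain ⟨σ, hσ, rfl⟩ := hτ
    have : (σ.image f).image g = σ := by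
      rw [Finset.image_image]
      exact image_eq_self (fun x hx => hgf x (vertex_of_mem hσ hx))
    rw [this]; exact hσ
  refine ⟨hf, g, hgsimp, ?_, ?_⟩
  · refine Relation.ReflTransGen.single ?_
    intro σ hσ
    have : σ.image (g ∘ f) = σ :=
      image_eq_self (fun x hx => hgf x (vertex_of_mem hσ hx))
    rw [this, Finset.image_id, Finset.union_self]; exact hσ
  · refine Relation.ReflTransGen.single ?_
    intro τ hτ
    have : τ.image (f ∘ g) = τ :=
      image_eq_self (fun w hw => (hgspec w (vertex_of_mem hτ hw)).2)
    rw [this, Finset.image_id, Finset.union_self]; exact hτ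

lemma iso_of_strongEquiv_minimal {K L : Cplx V} (hK : MinimalCplx K) (hL : MinimalCplx L)
    {f : V → V} (h : StrongEquiv K L f) : IsIsoMap K L f := by
  obtain ⟨hf, g, hg, hKc, hLc⟩ := h
  have hgf : ∀ v, IsVertex K v → g (f v) = v := fix_of_contigClass hK hKc
  have hfg : ∀ w, IsVertex L w → f (g w) = w := fix_of_contigClass hL hLc
  refine ⟨hf, ?_, ?_⟩
  · intro v₁ hv₁ v₂ hv₂ heq
    have := hgf v₁ hv₁
    rw [heq, hgf v₂ hv₂] at this
    exact this.symm
  · apply Finset.Subset.antisymm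
    · intro τ hτ
      rw [Finset.mem_image] at hτ
      obtain ⟨σ, hσ, rfl⟩ := hτ
      exact hf σ hσ
    · intro τ hτ
      rw [Finset.mem_image]
      refine ⟨τ.image g, hg τ hτ, ?_⟩
      rw [Finset.image_image]
      exact image_eq_self (fun w hw => hfg w (vertex_of_mem hτ hw))

lemma exists_core' : ∀ (n : ℕ) (K : Cplx V), K.faces.card ≤ n →
    ∃ K₀, MinimalCplx K₀ ∧ StrongCollapses K K₀ := by
  intro n
  induction n with
  | zero =>
    intro K hK
    refine ⟨K, ?_, Relation.ReflTransGen.refl⟩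
    intro v ⟨a, ha, _⟩
    have : link K v ⊆ K.faces := Finset.filter_subset _ _
    have := this ha
    rw [Finset.card_eq_zero.mp (Nat.le_zero.mp hK)] at this
    exact Finset.notMem_empty _ this
  | succ n ih =>
    intro K hK
    by_cases hmin : MinimalCplx K
    · exact ⟨K, hmin, Relation.ReflTransGen.refl⟩
    · simp only [MinimalCplx, not_forall, not_not] at hmin
      obtain ⟨v, hv⟩ := hmin
      have hv2 := hv
      obtain ⟨a, ha, -⟩ := hv2
      rw [mem_link_iff] at ha
      have hvf : ({v} : Finset V) ∈ K.faces :=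
        K.down_closed ha.2.2 (Finset.singleton_subset_iff.mpr (Finset.mem_insert_self _ _))
          ⟨v, Finset.mem_singleton_self v⟩
      have hlt : (delete K v).faces.card < K.faces.card := by
        apply Finset.card_lt_card
        constructor
        · exact Finset.filter_subset _ _
        · intro hsub
          have := hsub hvf
          rw [delete, Finset.mem_filter] at this
          exact this.2 (Finset.mem_singleton_self v)
      obtain ⟨K₀, hK₀, hc⟩ := ih (delete K v) (by omega)
      exact ⟨K₀, hK₀, Relation.ReflTransGen.head ⟨v, hv, rfl⟩ hc⟩

lemma exists_core (K : Cplx V) : ∃ K₀, MinimalCplx K₀ ∧ StrongCollapses K K₀ :=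
  exists_core' K.faces.card K le_rfl

end Aux5
section Aux6
variable {V : Type}

lemma strongEquiv_of_collapses {K L : Cplx V} (h : StrongCollapses K L) :
    (∃ f, StrongEquiv K L f) ∧ (∃ g, StrongEquiv L K g) := by
  induction h with
  | refl => exact ⟨⟨id, strongEquiv_refl K⟩, ⟨id, strongEquiv_refl K⟩⟩
  | tail _ step ih =>
    obtain ⟨⟨f, hf⟩, ⟨g, hg⟩⟩ := ih
    obtain ⟨r, hr, hrback⟩ := elem_equiv step
    exact ⟨⟨r ∘ f, strongEquiv_comp hf hr⟩, ⟨g ∘ id, strongEquiv_comp hrback hg⟩⟩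

lemma sameSHT_of_collapses {K L : Cplx V} (h : StrongCollapses K L) : SameSHT K L :=
  Relation.ReflTransGen.mono (fun _ _ hab => Or.inl hab) _ _ h

lemma sameSHT_of_collapses_rev {K L : Cplx V} (h : StrongCollapses K L) : SameSHT L K := by
  apply Relation.reflTransGen_swap.mp
  exact Relation.ReflTransGen.mono (fun _ _ hab => Or.inr (Or.inl hab)) _ _ h

end Aux6

/-- `K` and `L` have the same strong homotopy type iff there is a
strong equivalence `K → L`. -/
theorem stmt4 {V : Type} (K L : Cplx V) :
    SameSHT K L ↔ ∃ φ : V → V, StrongEquiv K L φ := by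
  constructor
  · intro h
    induction h with
    | refl => exact ⟨id, strongEquiv_refl K⟩
    | tail _ step ih =>
      obtain ⟨f, hf⟩ := ih
      rcases step with hc | hc | hc
      · obtain ⟨r, hr, -⟩ := elem_equiv hc
        exact ⟨r ∘ f, strongEquiv_comp hf hr⟩
      · obtain ⟨r, -, hid⟩ := elem_equiv hc
        exact ⟨id ∘ f, strongEquiv_comp hf hid⟩
      · obtain ⟨g, hg⟩ := hc
        exact ⟨g ∘ f, strongEquiv_comp hf (strongEquiv_of_iso hg)⟩
  · rintro ⟨φ, hφ⟩
    obtain ⟨K₀, hK₀min, hKc⟩ := exists_core K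
    obtain ⟨L₀, hL₀min, hLc⟩ := exists_core L
    obtain ⟨-, u, hu⟩ := strongEquiv_of_collapses hKc
    obtain ⟨⟨w, hw⟩, -⟩ := strongEquiv_of_collapses hLc
    have hKL₀ : StrongEquiv K₀ L₀ (w ∘ (φ ∘ u)) :=
      strongEquiv_comp (strongEquiv_comp hu hφ) hw
    have hiso : Isomorphic K₀ L₀ := ⟨_, iso_of_strongEquiv_minimal hK₀min hL₀min hKL₀⟩
    refine Relation.ReflTransGen.trans (sameSHT_of_collapses hKc) ?_
    refine Relation.ReflTransGen.trans (Relation.ReflTransGen.single (Or.inr (Or.inr hiso))) ?_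
    exact sameSHT_of_collapses_rev hLc

end StrongHomotopy
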